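/- arXiv:1809.10130 — 4 statements merged into one kernel-verified Lean document; each statement's English description precedes it below -/
import Mathlib

section
/- Let ζ be a complex number with |ζ| > 1, let z = (ζ + ζ⁻¹)/2, and let n be a nonnegative integer. Then ∫₀^π cos(nθ)/(z − cos θ) dθ = 2π / (ζⁿ(ζ − ζ⁻¹)). -/
/-!
With `w = e^{iθ}` one has `z - cos θ = -(w - ζ)(w - ζ⁻¹) / (2w)`, so `∫₀^{2π} dθ / (z - cos θ)`
is a contour integral over the unit circle whose only pole inside is `ζ⁻¹`; Cauchy's formula gives
`4π / (ζ - ζ⁻¹)`, and symmetry `θ ↦ 2π - θ` halves it. For higher `n`, writing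
`2 cos θ = 2z - 2(z - cos θ)` in `cos (n+2)θ = 2 cos θ cos (n+1)θ - cos nθ` shows that
`Iₙ = ∫₀^π cos nθ / (z - cos θ)` satisfies `Iₙ₊₂ = 2z Iₙ₊₁ - Iₙ` and `I₁ = z I₀ - π`, the recurrence
solved by `ζ⁻ⁿ` because `2z = ζ + ζ⁻¹`.
-/

open Complex Metric

lemma intervalIntegral.integral_zero_two_mul_of_symm {E : Type*} [NormedAddCommGroup E]
    [NormedSpace ℝ E] {f : ℝ → E} {a : ℝ} (hf : Continuous f) (hsymm : ∀ x, f (2 * a - x) = f x) :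
    ∫ x in (0:ℝ)..2 * a, f x = (2:ℝ) • ∫ x in (0:ℝ)..a, f x := by
  have hreflect := intervalIntegral.integral_comp_sub_left f (2 * a) (a := 0) (b := a)
  simp only [hsymm, sub_zero, show 2 * a - a = a by ring] at hreflect
  rw [← intervalIntegral.integral_add_adjacent_intervals (hf.intervalIntegrable 0 a)
    (hf.intervalIntegrable a (2 * a)), ← hreflect, two_smul]

lemma joukowsky_sub_joukowsky {ζ w : ℂ} (hζ : ζ ≠ 0) (hw : w ≠ 0) :
    (ζ + ζ⁻¹) / 2 - (w + w⁻¹) / 2 = -((w - ζ) * (w - ζ⁻¹)) / (2 * w) := by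
  field_simp
  ring

lemma ofReal_cos_eq_circleMap (θ : ℝ) :
    (Real.cos θ : ℂ) = (circleMap 0 1 θ + (circleMap 0 1 θ)⁻¹) / 2 := by
  rw [circleMap_zero, ofReal_one, one_mul, ofReal_cos, cos, ← exp_neg, neg_mul]

lemma joukowsky_sub_cos_eq {ζ : ℂ} (hζ : ζ ≠ 0) (θ : ℝ) :
    (ζ + ζ⁻¹) / 2 - Real.cos θ =
      -((circleMap 0 1 θ - ζ) * (circleMap 0 1 θ - ζ⁻¹)) / (2 * circleMap 0 1 θ) := by
  rw [ofReal_cos_eq_circleMap, joukowsky_sub_joukowsky hζ (circleMap_ne_center one_ne_zero)]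

section
variable {ζ : ℂ} (hζ : 1 < ‖ζ‖)
include hζ

lemma ne_zero_of_one_lt_norm : ζ ≠ 0 :=
  norm_pos_iff.1 (one_pos.trans hζ)

lemma norm_inv_lt_one_of_one_lt_norm : ‖ζ⁻¹‖ < 1 := by
  rw [norm_inv]
  exact inv_lt_one_of_one_lt₀ hζ

lemma sub_inv_ne_zero_of_one_lt_norm : ζ - ζ⁻¹ ≠ 0 :=
  sub_ne_zero.2 (ne_of_apply_ne norm (norm_inv_lt_one_of_one_lt_norm hζ |>.trans hζ).ne')

lemma circleMap_sub_ne_zero (θ : ℝ) : circleMap 0 1 θ - ζ ≠ 0 := by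
  rw [sub_ne_zero]
  rintro rfl
  simp [norm_circleMap_zero] at hζ

lemma circleMap_sub_inv_ne_zero (θ : ℝ) : circleMap 0 1 θ - ζ⁻¹ ≠ 0 :=
  sub_ne_zero.2 (circleMap_ne_mem_ball (mem_ball_zero_iff.2 (norm_inv_lt_one_of_one_lt_norm hζ)) θ)

lemma joukowsky_sub_cos_ne_zero (θ : ℝ) : (ζ + ζ⁻¹) / 2 - Real.cos θ ≠ 0 := by
  rw [joukowsky_sub_cos_eq (ne_zero_of_one_lt_norm hζ)]
  exact div_ne_zero (neg_ne_zero.2 (mul_ne_zero (circleMap_sub_ne_zero hζ θ)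
    (circleMap_sub_inv_ne_zero hζ θ))) (mul_ne_zero two_ne_zero (circleMap_ne_center one_ne_zero))

lemma integral_inv_joukowsky_sub_cos :
    ∫ θ in (0:ℝ)..2 * Real.pi, ((ζ + ζ⁻¹) / 2 - Real.cos θ)⁻¹ = 4 * Real.pi / (ζ - ζ⁻¹) := by
  have hζ0 := ne_zero_of_one_lt_norm hζ
  have hcauchy :
      (∮ w in C(0, 1), (w - ζ⁻¹)⁻¹ • (w - ζ)⁻¹) = (2 * Real.pi * I : ℂ) • (ζ⁻¹ - ζ)⁻¹ := by
    refine DifferentiableOn.circleIntegral_sub_inv_smul ?_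
      (mem_ball_zero_iff.2 (norm_inv_lt_one_of_one_lt_norm hζ))
    exact (differentiableOn_id.sub_const ζ).inv fun w hw =>
      sub_ne_zero.2 (ne_of_apply_ne norm ((mem_closedBall_zero_iff.1 hw).trans_lt hζ).ne)
  have hintegrand : ∀ θ : ℝ,
      deriv (circleMap 0 1) θ • ((circleMap 0 1 θ - ζ⁻¹)⁻¹ • (circleMap 0 1 θ - ζ)⁻¹) =
        -(I / 2) * ((ζ + ζ⁻¹) / 2 - Real.cos θ)⁻¹ := by
    intro θ
    have := circleMap_sub_ne_zero hζ θ
    have := circleMap_sub_inv_ne_zero hζ θ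
    have : circleMap 0 1 θ ≠ 0 := circleMap_ne_center one_ne_zero
    rw [deriv_circleMap, joukowsky_sub_cos_eq hζ0, smul_eq_mul, smul_eq_mul]
    field_simp
  rw [circleIntegral, funext hintegrand, intervalIntegral.integral_const_mul] at hcauchy
  have hd := sub_inv_ne_zero_of_one_lt_norm hζ
  generalize (∫ θ in (0:ℝ)..2 * Real.pi, ((ζ + ζ⁻¹) / 2 - Real.cos θ)⁻¹) = J at hcauchy ⊢
  rw [smul_eq_mul, ← neg_sub, inv_neg] at hcauchy
  field_simp at hcauchy ⊢
  linear_combination -hcauchy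
end

noncomputable def cosDivIntegral (z : ℂ) (n : ℕ) : ℂ :=
  ∫ θ in (0:ℝ)..Real.pi, (Real.cos (n * θ) : ℂ) / (z - Real.cos θ)

section
variable {z : ℂ} (hz : ∀ θ : ℝ, z - Real.cos θ ≠ 0)
include hz

lemma continuous_cos_mul_div_sub_cos (c : ℝ) :
    Continuous fun θ : ℝ => (Real.cos (c * θ) : ℂ) / (z - Real.cos θ) :=
  Continuous.div (by fun_prop) (by fun_prop) hz

lemma cosDivIntegral_one : cosDivIntegral z 1 = z * cosDivIntegral z 0 - Real.pi := by
  have hpointwise : ∀ θ : ℝ, (Real.cos ((1:ℕ) * θ) : ℂ) / (z - Real.cos θ) =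
      z * ((Real.cos ((0:ℕ) * θ) : ℂ) / (z - Real.cos θ)) - 1 := by
    intro θ
    have := hz θ
    simp only [Nat.cast_one, one_mul, Nat.cast_zero, zero_mul, Real.cos_zero, ofReal_one]
    field_simp
    ring
  rw [cosDivIntegral, funext hpointwise, intervalIntegral.integral_sub,
    intervalIntegral.integral_const_mul]
  · simp [cosDivIntegral]
  · exact ((continuous_cos_mul_div_sub_cos hz _).const_mul z).intervalIntegrable _ _
  · exact intervalIntegrable_const

lemma cosDivIntegral_add_two (n : ℕ) :
    cosDivIntegral z (n + 2) = 2 * z * cosDivIntegral z (n + 1) - cosDivIntegral z n := by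
  have hpointwise : ∀ θ : ℝ, (Real.cos ((n + 2 : ℕ) * θ) : ℂ) / (z - Real.cos θ) =
      2 * z * ((Real.cos ((n + 1 : ℕ) * θ) : ℂ) / (z - Real.cos θ))
        - 2 * (Real.cos ((n + 1 : ℕ) * θ) : ℂ) - (Real.cos (n * θ) : ℂ) / (z - Real.cos θ) := by
    intro θ
    have := hz θ
    have hcos : Real.cos ((n + 2 : ℕ) * θ) =
        2 * Real.cos θ * Real.cos ((n + 1 : ℕ) * θ) - Real.cos (n * θ) := by
      push_cast
      rw [show ((n:ℝ) + 2) * θ = ((n:ℝ) + 1) * θ + θ by ring,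
        show (n:ℝ) * θ = ((n:ℝ) + 1) * θ - θ by ring, Real.cos_add, Real.cos_sub]
      ring
    rw [hcos, ofReal_sub, ofReal_mul, ofReal_mul, ofReal_ofNat]
    field_simp
    ring
  have hvanish : ∫ θ in (0:ℝ)..Real.pi, (Real.cos ((n + 1 : ℕ) * θ) : ℂ) = 0 := by
    rw [intervalIntegral.integral_ofReal,
      intervalIntegral.integral_comp_mul_left (fun x => Real.cos x)
        (Nat.cast_ne_zero.2 n.succ_ne_zero), integral_cos, Real.sin_nat_mul_pi]
    simp
  have hcont := continuous_cos_mul_div_sub_cos hz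
  rw [cosDivIntegral, funext hpointwise, intervalIntegral.integral_sub,
    intervalIntegral.integral_sub, intervalIntegral.integral_const_mul,
    intervalIntegral.integral_const_mul, hvanish]
  · simp [cosDivIntegral]
  · exact ((hcont _).const_mul _).intervalIntegrable _ _
  · exact Continuous.intervalIntegrable (by fun_prop) _ _
  · exact (((hcont _).const_mul _).sub (by fun_prop)).intervalIntegrable _ _
  · exact (hcont _).intervalIntegrable _ _
end

lemma cosDivIntegral_zero_joukowsky {ζ : ℂ} (hζ : 1 < ‖ζ‖) :
    cosDivIntegral ((ζ + ζ⁻¹) / 2) 0 = 2 * Real.pi / (ζ - ζ⁻¹) := by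
  have hsymm := intervalIntegral.integral_zero_two_mul_of_symm (a := Real.pi)
    (continuous_cos_mul_div_sub_cos (joukowsky_sub_cos_ne_zero hζ) 0)
    (fun θ => by simp [Real.cos_two_pi_sub])
  simp only [cosDivIntegral, Nat.cast_zero, zero_mul, Real.cos_zero, ofReal_one, one_div] at hsymm ⊢
  rw [integral_inv_joukowsky_sub_cos hζ] at hsymm
  have hd := sub_inv_ne_zero_of_one_lt_norm hζ
  rw [two_smul, ← two_mul, div_eq_iff hd] at hsymm
  rw [eq_div_iff hd]
  linear_combination -hsymm / 2

theorem stmt_4 (ζ : ℂ) (hζ : 1 < ‖ζ‖) (n : ℕ)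
    (z : ℂ) (hz : z = (ζ + ζ⁻¹) / 2) :
    ∫ θ in (0:ℝ)..Real.pi, (Real.cos (n * θ) : ℂ) / (z - (Real.cos θ : ℂ)) =
      2 * Real.pi / (ζ ^ n * (ζ - ζ⁻¹)) := by
  subst hz
  have hden := joukowsky_sub_cos_ne_zero hζ
  have hζ0 := ne_zero_of_one_lt_norm hζ
  have hd := sub_inv_ne_zero_of_one_lt_norm hζ
  have hsq : ζ ^ 2 - 1 ≠ 0 := fun h => hd (by field_simp; linear_combination h)
  change cosDivIntegral _ n = _
  induction n using Nat.twoStepInduction with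
  | zero => simpa using cosDivIntegral_zero_joukowsky hζ
  | one => rw [cosDivIntegral_one hden, cosDivIntegral_zero_joukowsky hζ]; field_simp; ring
  | more n ih₀ ih₁ => rw [cosDivIntegral_add_two hden, ih₀, ih₁]; field_simp; ring
end

section
/- Let n > 1 be an integer, ρ > 1 real, and a = (ρ^{2n} + ρ^{−2n})/2. Then ∫₀^π cos(2θ)/(a + cos(2nθ)) dθ = 0. -/
/-!
Cut `[0, π]` into the `n` intervals of length `π/n` and translate them onto `[0, π/n]`. The
denominator `a + cos (2nθ)` is `π/n`-periodic, so at each point the `n` translated integrands share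
it, while their numerators `cos (2θ + 2πk/n)` are the real parts of `e^{2iθ}` times the `n`-th
roots of unity, which sum to zero because `n > 1`. Since `a = cosh (2n log ρ) > 1`, the
denominator never vanishes.
-/

open Real Finset intervalIntegral

theorem sum_range_cos_add_two_pi_mul_div {n : ℕ} (hn : 1 < n) (x : ℝ) :
    ∑ k ∈ range n, cos (x + 2 * π * k / n) = 0 := by
  have hn0 : (n : ℂ) ≠ 0 := Nat.cast_ne_zero.2 (by omega)
  have hζ := Complex.isPrimitiveRoot_exp n (by omega)
  have hterm : ∀ k : ℕ, cos (x + 2 * π * k / n)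
      = (Complex.exp (x * Complex.I) * Complex.exp (2 * π * Complex.I / n) ^ k).re := by
    intro k
    rw [← Complex.exp_nat_mul, ← Complex.exp_add, ← Complex.exp_ofReal_mul_I_re]
    congr 2
    push_cast
    field_simp
  simp only [hterm, ← Complex.re_sum, ← mul_sum, hζ.geom_sum_eq_zero hn, mul_zero,
    Complex.zero_re]

theorem integral_eq_integral_sum_comp_add_nat_mul {E : Type*} [NormedAddCommGroup E]
    [NormedSpace ℝ E] {f : ℝ → E} (hf : Continuous f) (n : ℕ) (T : ℝ) :
    ∫ x in (0 : ℝ)..n * T, f x = ∫ x in (0 : ℝ)..T, ∑ k ∈ range n, f (x + k * T) := by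
  rw [integral_finsetSum (f := fun (k : ℕ) x => f (x + k * T)) fun k _ =>
    (hf.comp (continuous_add_const _)).intervalIntegrable _ _]
  have hadj := sum_integral_adjacent_intervals (a := fun k : ℕ => k * T)
    (μ := MeasureTheory.volume) (f := f) (n := n) fun k _ => hf.intervalIntegrable _ _
  simp only [Nat.cast_zero, zero_mul] at hadj
  rw [← hadj]
  refine sum_congr rfl fun k _ => ?_
  rw [integral_comp_add_right]
  push_cast
  ring_nf

theorem integral_cos_two_mul_div_add_cos_eq_zero {n : ℕ} (hn : 1 < n) {a : ℝ} (ha : 1 < a) :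
    ∫ θ in (0 : ℝ)..π, cos (2 * θ) / (a + cos (2 * n * θ)) = 0 := by
  have hn0 : (n : ℝ) ≠ 0 := Nat.cast_ne_zero.2 (by omega)
  have hden : ∀ y, a + cos y ≠ 0 := fun y => by linarith [neg_one_le_cos y]
  have hf : Continuous fun θ => cos (2 * θ) / (a + cos (2 * n * θ)) := by
    fun_prop (disch := exact fun _ => hden _)
  have hshift : ∀ (x : ℝ) (k : ℕ),
      cos (2 * (x + k * (π / n))) / (a + cos (2 * n * (x + k * (π / n))))
        = cos (2 * x + 2 * π * k / n) / (a + cos (2 * n * x)) := fun x k => by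
    have hnum : 2 * (x + k * (π / n)) = 2 * x + 2 * π * k / n := by ring
    have harg : 2 * n * (x + k * (π / n)) = 2 * n * x + k * (2 * π) := by field_simp
    rw [hnum, harg, cos_add_nat_mul_two_pi]
  rw [show π = n * (π / n) by field_simp, integral_eq_integral_sum_comp_add_nat_mul hf]
  simp only [hshift, ← sum_div, sum_range_cos_add_two_pi_mul_div hn, zero_div, integral_zero]

theorem stmt_9 (n : ℕ) (hn : 1 < n) (ρ : ℝ) (hρ : 1 < ρ)
    (a : ℝ) (ha : a = (ρ ^ (2 * n) + ρ ^ (-(2 * n : ℤ))) / 2) :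
    ∫ θ in (0:ℝ)..Real.pi, Real.cos (2 * θ) / (a + Real.cos (2 * n * θ)) = 0 := by
  have hpow : 1 < ρ ^ (2 * n) := one_lt_pow₀ hρ (by omega)
  have ha1 : 1 < a := by
    rw [ha, zpow_neg, show (2 * n : ℤ) = (2 * n : ℕ) by push_cast; rfl, zpow_natCast]
    rw [← cosh_log (by linarith), one_lt_cosh]
    exact (log_pos hpow).ne'
  exact integral_cos_two_mul_div_add_cos_eq_zero hn ha1
end

section
/- Let ρ > 1 and n ≥ 1 an integer. Then (1/(2π))·∫₀^{2π} [π·√(ρ^{−4n} + 9 + 6ρ^{−2n}cos(2nθ))] / [2^{2n−1}·ρⁿ·√((a₂ − cos 2θ)(a_{2n} + cos 2nθ))] · (1/√2)·√(a₂ − cos 2θ) dθ ≤ (π/(ρⁿ·2^{2n−1}))·√((7ρ^{−2n} + 9ρ^{2n})/(ρ^{4n} − 1)), where a_m = (ρ^m + ρ^{−m})/2. -/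
/-!
With `r = ρ^{2n}` one has `a_{2n} = (r + r⁻¹)/2`, and the factor `√(a₂ - cos 2θ)` cancels, so the
left side is a constant times `∫₀^{2π} √(N/D)` with `N = r⁻² + 9 + 6r⁻¹ cos 2nθ` and
`D = a_{2n} + cos 2nθ`. Cauchy–Schwarz bounds this by `√(2π ∫ N/D)`, and `N/D` is a constant plus a
multiple of `1/D`, whose integral is `2π/√(a_{2n}² - 1) = 4πr/(r² - 1)`.
-/

open Real intervalIntegral
open MeasureTheory (volume)

-- Unlike the textbook primitive `2/b · arctan(√((a-1)/(a+1)) tan(θ/2))`, this one is smooth on all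
-- of `ℝ`. With `b = √(a² - 1)` and `c = a + b`, the identities `c² - 1 = 2bc`, `c² + 1 = 2ac` make
-- its derivative `(1 - 2(c cos θ + 1)/(c² + 2c cos θ + 1))/b` equal to `1/(a + cos θ)`.
noncomputable def invAddCosPrimitive (a θ : ℝ) : ℝ :=
  (θ - 2 * arctan (sin θ / (a + √(a ^ 2 - 1) + cos θ))) / √(a ^ 2 - 1)

theorem hasDerivAt_invAddCosPrimitive {a : ℝ} (ha : 1 < a) (θ : ℝ) :
    HasDerivAt (invAddCosPrimitive a) (a + cos θ)⁻¹ θ := by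
  set b := √(a ^ 2 - 1)
  set c := a + b with hcdef
  have hb : 0 < b := sqrt_pos.2 (by nlinarith)
  have hb2 : b ^ 2 = a ^ 2 - 1 := sq_sqrt (by nlinarith)
  have hcos := neg_one_le_cos θ
  have hc : 0 < c + cos θ := by linarith
  have hac : 0 < a + cos θ := by linarith
  have hu : HasDerivAt (fun θ => sin θ / (c + cos θ))
      ((cos θ * (c + cos θ) - sin θ * -sin θ) / (c + cos θ) ^ 2) θ :=
    (hasDerivAt_sin θ).div ((hasDerivAt_cos θ).const_add c) hc.ne'
  refine (((hasDerivAt_id' θ).sub (hu.arctan.const_mul 2)).div_const b).congr_deriv ?_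
  have hnum : cos θ * (c + cos θ) - sin θ * -sin θ = c * cos θ + 1 := by
    linear_combination sin_sq_add_cos_sq θ
  have hden : 1 + (sin θ / (c + cos θ)) ^ 2 = (c ^ 2 + 2 * c * cos θ + 1) / (c + cos θ) ^ 2 := by
    field_simp
    linear_combination sin_sq_add_cos_sq θ
  have hD : 0 < c ^ 2 + 2 * c * cos θ + 1 := by nlinarith
  have hratio : 1 / ((c ^ 2 + 2 * c * cos θ + 1) / (c + cos θ) ^ 2) *
      ((c * cos θ + 1) / (c + cos θ) ^ 2) = (c * cos θ + 1) / (c ^ 2 + 2 * c * cos θ + 1) := by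
    field_simp
  rw [hnum, hden, hratio, ← mul_div_assoc, one_sub_div hD.ne', div_div, div_eq_iff (by positivity),
    inv_mul_eq_div, eq_div_iff hac.ne']
  clear_value c b
  subst hcdef
  linear_combination (-(a + b + cos θ)) * hb2

theorem integral_inv_add_cos_mul {a : ℝ} (ha : 1 < a) {k : ℕ} (hk : k ≠ 0) :
    ∫ θ in (0)..(2 * π), (a + cos (k * θ))⁻¹ = 2 * π / √(a ^ 2 - 1) := by
  have hk' : (k : ℝ) ≠ 0 := Nat.cast_ne_zero.2 hk
  have hderiv : ∀ θ, HasDerivAt (fun θ => invAddCosPrimitive a (k * θ) / k)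
      (a + cos (k * θ))⁻¹ θ := fun θ => by
    simpa [hk'] using
      ((hasDerivAt_invAddCosPrimitive ha (k * θ)).comp θ
        ((hasDerivAt_id θ).const_mul (k : ℝ))).div_const (k : ℝ)
  have hcont : Continuous fun θ : ℝ => (a + cos (k * θ))⁻¹ := by
    refine Continuous.inv₀ (by fun_prop) fun θ => ?_
    nlinarith [neg_one_le_cos (k * θ)]
  rw [integral_eq_sub_of_hasDerivAt (fun θ _ => hderiv θ) (hcont.intervalIntegrable _ _)]
  have hsin : sin (k * (2 * π)) = 0 := by
    rw [show (k : ℝ) * (2 * π) = ((2 * k : ℕ) : ℝ) * π by push_cast; ring]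
    exact sin_nat_mul_pi _
  simp [invAddCosPrimitive, hsin]
  field_simp

theorem integral_div_add_cos_mul {a : ℝ} (ha : 1 < a) {k : ℕ} (hk : k ≠ 0) (p q : ℝ) :
    ∫ θ in (0)..(2 * π), (p + q * cos (k * θ)) / (a + cos (k * θ)) =
      2 * π * (q + (p - q * a) / √(a ^ 2 - 1)) := by
  have hsplit : ∀ θ : ℝ, (p + q * cos (k * θ)) / (a + cos (k * θ)) =
      q + (p - q * a) * (a + cos (k * θ))⁻¹ := fun θ => by
    have : a + cos (k * θ) ≠ 0 := by nlinarith [neg_one_le_cos (k * θ)]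
    field_simp
    ring
  have hcont : Continuous fun θ : ℝ => (a + cos (k * θ))⁻¹ := by
    refine Continuous.inv₀ (by fun_prop) fun θ => ?_
    nlinarith [neg_one_le_cos (k * θ)]
  simp_rw [hsplit]
  rw [integral_add intervalIntegrable_const ((hcont.const_mul _).intervalIntegrable _ _),
    integral_const_mul, integral_inv_add_cos_mul ha hk, integral_const]
  simp only [sub_zero, smul_eq_mul]
  ring

theorem sq_intervalIntegral_le {f : ℝ → ℝ} {a b : ℝ} (hab : a ≤ b)
    (hf : IntervalIntegrable f volume a b) (hf2 : IntervalIntegrable (fun x => f x ^ 2) volume a b) :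
    (∫ x in a..b, f x) ^ 2 ≤ (b - a) * ∫ x in a..b, f x ^ 2 := by
  rcases hab.eq_or_lt with rfl | hlt
  · simp
  set S := ∫ x in a..b, f x
  set m := S / (b - a) with hm
  -- the variance of `f` about its mean `m` is nonnegative
  have hvar : 0 ≤ ∫ x in a..b, (f x - m) ^ 2 :=
    integral_nonneg hab fun x _ => sq_nonneg _
  have hexpand : ∫ x in a..b, (f x - m) ^ 2 = (∫ x in a..b, f x ^ 2) - S ^ 2 / (b - a) := by
    have hlin : IntervalIntegrable (fun x => 2 * m * f x) volume a b := hf.const_mul _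
    simp_rw [show ∀ x, (f x - m) ^ 2 = (f x ^ 2 - 2 * m * f x) + m ^ 2 from fun x => by ring]
    rw [integral_add (hf2.sub hlin) intervalIntegrable_const, integral_sub hf2 hlin,
      integral_const_mul, integral_const, smul_eq_mul, hm]
    field_simp
    ring
  rw [hexpand, sub_nonneg, div_le_iff₀ (sub_pos.2 hlt)] at hvar
  linarith

theorem intervalIntegral_sqrt_le {h : ℝ → ℝ} {a b : ℝ} (hab : a ≤ b) (h_nonneg : ∀ x, 0 ≤ h x)
    (hh : IntervalIntegrable h volume a b)
    (hsqrt : IntervalIntegrable (fun x => √(h x)) volume a b) :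
    ∫ x in a..b, √(h x) ≤ √((b - a) * ∫ x in a..b, h x) := by
  apply le_sqrt_of_sq_le
  have := sq_intervalIntegral_le hab hsqrt (by simpa only [sq_sqrt (h_nonneg _)] using hh)
  simpa only [sq_sqrt (h_nonneg _)] using this

theorem one_lt_add_inv_div_two {x : ℝ} (hx : 1 < x) : 1 < (x + x⁻¹) / 2 := by
  have hx0 : 0 < x := by linarith
  have : x + x⁻¹ - 2 = (x - 1) ^ 2 / x := by field_simp; ring
  rw [lt_div_iff₀ two_pos, one_mul, ← sub_pos, this]
  exact div_pos (pow_pos (sub_pos.2 hx) 2) hx0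

theorem sqrt_sq_add_inv_div_two_sub_one {x : ℝ} (hx : 1 ≤ x) :
    √(((x + x⁻¹) / 2) ^ 2 - 1) = (x - x⁻¹) / 2 := by
  have hx0 : 0 < x := by linarith
  rw [show ((x + x⁻¹) / 2) ^ 2 - 1 = ((x - x⁻¹) / 2) ^ 2 by field_simp; ring]
  exact sqrt_sq (by nlinarith [inv_le_one_of_one_le₀ hx])

theorem integral_inv_sq_add_nine_div_add_cos_le {r : ℝ} (hr : 1 < r) {k : ℕ} (hk : k ≠ 0) :
    ∫ θ in (0)..(2 * π), (r⁻¹ ^ 2 + 9 + 6 * r⁻¹ * cos (k * θ)) / ((r + r⁻¹) / 2 + cos (k * θ)) ≤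
      4 * π * ((7 * r⁻¹ + 9 * r) / (r ^ 2 - 1)) := by
  rw [integral_div_add_cos_mul (one_lt_add_inv_div_two hr) hk,
    sqrt_sq_add_inv_div_two_sub_one hr.le]
  have hr0 : 0 < r := by linarith
  have hr2 : 0 < r ^ 2 - 1 := by nlinarith
  -- the exact value is `4π (9r - 5r⁻¹) / (r² - 1)`
  rw [← sub_nonneg]
  have key : 4 * π * ((7 * r⁻¹ + 9 * r) / (r ^ 2 - 1)) -
      2 * π * (6 * r⁻¹ + (r⁻¹ ^ 2 + 9 - 6 * r⁻¹ * ((r + r⁻¹) / 2)) / ((r - r⁻¹) / 2)) =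
      48 * π * r⁻¹ / (r ^ 2 - 1) := by
    have : r - r⁻¹ ≠ 0 := by
      rw [sub_ne_zero]; exact (inv_lt_one_of_one_lt₀ hr |>.trans hr).ne'
    field_simp
    ring
  rw [key]
  positivity

theorem integral_sqrt_inv_sq_add_nine_div_add_cos_le {r : ℝ} (hr : 1 < r) {k : ℕ} (hk : k ≠ 0) :
    ∫ θ in (0)..(2 * π),
        √((r⁻¹ ^ 2 + 9 + 6 * r⁻¹ * cos (k * θ)) / ((r + r⁻¹) / 2 + cos (k * θ))) ≤
      2 * π * √(2 * ((7 * r⁻¹ + 9 * r) / (r ^ 2 - 1))) := by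
  set h : ℝ → ℝ := fun θ =>
    (r⁻¹ ^ 2 + 9 + 6 * r⁻¹ * cos (k * θ)) / ((r + r⁻¹) / 2 + cos (k * θ))
  have hden : ∀ θ : ℝ, 0 < (r + r⁻¹) / 2 + cos (k * θ) := fun θ => by
    linarith [one_lt_add_inv_div_two hr, neg_one_le_cos (k * θ)]
  have h_nonneg : ∀ θ, 0 ≤ h θ := fun θ => by
    refine div_nonneg ?_ (hden θ).le
    nlinarith [sq_nonneg (3 - r⁻¹), neg_one_le_cos (k * θ), inv_pos.2 (zero_lt_one.trans hr)]
  have h_cont : Continuous h :=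
    Continuous.div (by fun_prop) (by fun_prop) fun θ => (hden θ).ne'
  calc ∫ θ in (0)..(2 * π), √(h θ)
      ≤ √((2 * π - 0) * ∫ θ in (0)..(2 * π), h θ) :=
        intervalIntegral_sqrt_le (by positivity) h_nonneg (h_cont.intervalIntegrable _ _)
          ((continuous_sqrt.comp h_cont).intervalIntegrable _ _)
    _ ≤ √((2 * π) * (4 * π * ((7 * r⁻¹ + 9 * r) / (r ^ 2 - 1)))) := by
        rw [sub_zero]
        gcongr
        exact integral_inv_sq_add_nine_div_add_cos_le hr hk
    _ = 2 * π * √(2 * ((7 * r⁻¹ + 9 * r) / (r ^ 2 - 1))) := by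
        rw [show 2 * π * (4 * π * ((7 * r⁻¹ + 9 * r) / (r ^ 2 - 1))) =
            (2 * π) ^ 2 * (2 * ((7 * r⁻¹ + 9 * r) / (r ^ 2 - 1))) by ring,
          sqrt_mul (by positivity), sqrt_sq (by positivity)]

theorem mul_sqrt_div_mul_sqrt_mul_mul_sqrt {x y : ℝ} (hx : 0 < x) (hy : 0 ≤ y) (c d e N : ℝ) :
    c * √N / (d * √(x * y)) * (e * √x) = c * e / d * √(N / y) := by
  have : √x ≠ 0 := (sqrt_pos.2 hx).ne'
  rw [sqrt_mul' x hy, sqrt_div' N hy]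
  field_simp

theorem stmt_15 (ρ : ℝ) (hρ : 1 < ρ) (n : ℕ) (hn : 1 ≤ n)
    (a : ℕ → ℝ) (ha : ∀ m, a m = (ρ ^ m + ρ ^ (-(m : ℤ))) / 2) :
    (1 / (2 * Real.pi)) *
        ∫ θ in (0:ℝ)..(2 * Real.pi),
          Real.pi * Real.sqrt (ρ ^ (-(4 * n : ℤ)) + 9 + 6 * ρ ^ (-(2 * n : ℤ)) *
              Real.cos (2 * n * θ)) /
            (2 ^ (2 * n - 1) * ρ ^ n *
              Real.sqrt ((a 2 - Real.cos (2 * θ)) * (a (2 * n) + Real.cos (2 * n * θ)))) *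
          ((1 / Real.sqrt 2) * Real.sqrt (a 2 - Real.cos (2 * θ))) ≤
      Real.pi / (ρ ^ n * 2 ^ (2 * n - 1)) *
        Real.sqrt ((7 * ρ ^ (-(2 * n : ℤ)) + 9 * ρ ^ (2 * n)) / (ρ ^ (4 * n) - 1)) := by
  have ha_gt : ∀ m ≠ 0, 1 < a m := fun m hm => by
    rw [ha, zpow_neg, zpow_natCast]
    exact one_lt_add_inv_div_two (one_lt_pow₀ hρ hm)
  have hx : ∀ θ : ℝ, 0 < a 2 - cos (2 * θ) := fun θ => by
    linarith [ha_gt 2 two_ne_zero, cos_le_one (2 * θ)]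
  have hy : ∀ θ : ℝ, 0 ≤ a (2 * n) + cos (2 * n * θ) := fun θ => by
    linarith [ha_gt (2 * n) (by omega), neg_one_le_cos (2 * n * θ)]
  simp_rw [mul_sqrt_div_mul_sqrt_mul_mul_sqrt (hx _) (hy _), integral_const_mul]
  set r := ρ ^ (2 * n) with hr_def
  have hzpow2 : ρ ^ (-(2 * n : ℤ)) = r⁻¹ := by rw [zpow_neg]; norm_cast
  have hzpow4 : ρ ^ (-(4 * n : ℤ)) = r⁻¹ ^ 2 := by
    rw [zpow_neg, hr_def, ← inv_pow, ← pow_mul]; norm_cast; ring_nf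
  have hpow4 : ρ ^ (4 * n) = r ^ 2 := by rw [hr_def, ← pow_mul]; ring_nf
  have ha2n : a (2 * n) = (r + r⁻¹) / 2 := by rw [ha, zpow_neg, zpow_natCast]
  have h_bound := integral_sqrt_inv_sq_add_nine_div_add_cos_le (one_lt_pow₀ hρ (by omega) : 1 < r)
    (k := 2 * n) (by omega)
  push_cast at h_bound
  rw [hzpow2, hzpow4, hpow4, ha2n]
  calc _ ≤ 1 / (2 * π) * (π * (1 / √2) / (2 ^ (2 * n - 1) * ρ ^ n) *
          (2 * π * √(2 * ((7 * r⁻¹ + 9 * r) / (r ^ 2 - 1))))) := by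
        gcongr
    _ = _ := by
        rw [sqrt_mul zero_le_two]
        field_simp
end

section
/- Let ρ > 1, n ≥ 1, and set a₁ = (ρ + ρ⁻¹)/2. Then the circumference of the ellipse with semi-axes a₁ = (ρ+ρ⁻¹)/2 and b₁ = (ρ−ρ⁻¹)/2 satisfies l(E_ρ) ≤ 2πa₁·(1 − (1/4)a₁^{−2} − (3/64)a₁^{−4} − (5/256)a₁^{−6}). -/
/-!
With `a₁ = cosh (log ρ)` and `b₁ = sinh (log ρ)` we have `b₁² = a₁² - 1`, so the integrand is
`√(a₁² - cos² t)`. Every Taylor coefficient of `x ↦ √(a² - x)` at `0` after the constant one is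
negative, so the Taylor polynomial of degree three is an upper bound on `[0, a²]`; integrating it
against the Wallis values `∫₀^{2π} cos^{2k} = 2π (2k-1)!!/(2k)!!` gives the bound.
-/

open Real intervalIntegral

lemma sqrt_sq_sub_le_taylor {a x : ℝ} (ha : 0 < a) (hx₀ : 0 ≤ x) (hx : x ≤ a ^ 2) :
    √(a ^ 2 - x) ≤ a - x / (2 * a) - x ^ 2 / (8 * a ^ 3) - x ^ 3 / (16 * a ^ 5) := by
  set N := 16 * a ^ 6 - 8 * a ^ 4 * x - 2 * a ^ 2 * x ^ 2 - x ^ 3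
  have h_eq : a - x / (2 * a) - x ^ 2 / (8 * a ^ 3) - x ^ 3 / (16 * a ^ 5) = N / (16 * a ^ 5) := by
    field_simp; ring
  have hN : 0 ≤ N := by
    have hx2 : x ^ 2 ≤ (a ^ 2) ^ 2 := pow_le_pow_left₀ hx₀ hx 2
    have hx3 : x ^ 3 ≤ (a ^ 2) ^ 3 := pow_le_pow_left₀ hx₀ hx 3
    nlinarith [mul_le_mul_of_nonneg_left hx (pow_pos ha 4).le,
      mul_le_mul_of_nonneg_left hx2 (pow_pos ha 2).le, pow_pos ha 6]
  -- the remainder of the square: `N² - (a² - x)(16a⁵)² = x⁴ (20a⁴ + 4a²x + x²)`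
  have h_rem : (a ^ 2 - x) * (16 * a ^ 5) ^ 2 ≤ N ^ 2 := by
    nlinarith [mul_nonneg (pow_nonneg hx₀ 4)
      (by positivity : (0:ℝ) ≤ 20 * a ^ 4 + 4 * a ^ 2 * x + x ^ 2)]
  rw [h_eq, sqrt_le_left (by positivity), div_pow, le_div_iff₀ (by positivity)]
  exact h_rem

lemma integral_cos_pow_add_two_zero_two_pi (n : ℕ) :
    ∫ t in (0)..(2 * π), cos t ^ (n + 2) = (n + 1) / (n + 2) * ∫ t in (0)..(2 * π), cos t ^ n := by
  simp [integral_cos_pow]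

lemma integral_taylor_sqrt_sq_sub_cos_sq {a : ℝ} (ha : a ≠ 0) :
    ∫ t in (0)..(2 * π), (a - cos t ^ 2 / (2 * a) - (cos t ^ 2) ^ 2 / (8 * a ^ 3)
        - (cos t ^ 2) ^ 3 / (16 * a ^ 5)) =
      2 * π * a * (1 - (1 / 4) * a ^ (-2 : ℤ) - (3 / 64) * a ^ (-4 : ℤ) -
        (5 / 256) * a ^ (-6 : ℤ)) := by
  have h2 := integral_cos_pow_add_two_zero_two_pi 0
  have h4 := integral_cos_pow_add_two_zero_two_pi 2
  have h6 := integral_cos_pow_add_two_zero_two_pi 4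
  simp only [← pow_mul]
  rw [integral_sub, integral_sub, integral_sub, integral_const, integral_div, integral_div,
    integral_div, h6, h4, h2]
  · simp [zpow_neg]
    field_simp
    ring
  all_goals exact Continuous.intervalIntegrable (by fun_prop) _ _

theorem stmt_18 (ρ : ℝ) (hρ : 1 < ρ)
    (a₁ b₁ : ℝ) (ha₁ : a₁ = (ρ + ρ⁻¹) / 2) (hb₁ : b₁ = (ρ - ρ⁻¹) / 2) :
    (∫ t in (0:ℝ)..(2 * Real.pi),
        Real.sqrt (a₁ ^ 2 * (Real.sin t) ^ 2 + b₁ ^ 2 * (Real.cos t) ^ 2)) ≤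
      2 * Real.pi * a₁ *
        (1 - (1 / 4) * a₁ ^ (-2 : ℤ) - (3 / 64) * a₁ ^ (-4 : ℤ) -
          (5 / 256) * a₁ ^ (-6 : ℤ)) := by
  have hρ₀ : 0 < ρ := one_pos.trans hρ
  rw [← cosh_log hρ₀] at ha₁
  rw [← sinh_log hρ₀] at hb₁
  have h_one_le : 1 ≤ a₁ := ha₁ ▸ one_le_cosh _
  have h_integrand (t : ℝ) : a₁ ^ 2 * sin t ^ 2 + b₁ ^ 2 * cos t ^ 2 = a₁ ^ 2 - cos t ^ 2 := by
    rw [ha₁, hb₁, cosh_sq, sin_sq]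
    ring
  rw [← integral_taylor_sqrt_sq_sub_cos_sq (by positivity : a₁ ≠ 0)]
  refine integral_mono_on two_pi_pos.le (Continuous.intervalIntegrable (by fun_prop) _ _)
    (Continuous.intervalIntegrable (by fun_prop) _ _) fun t _ => ?_
  rw [h_integrand]
  exact sqrt_sq_sub_le_taylor (by positivity) (sq_nonneg _)
    (by nlinarith [cos_sq_le_one t])
end
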